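/- arXiv:2009.11950 — 8 statements merged into one kernel-verified Lean document; each statement's English description precedes it below -/
import Mathlib

section
/- Let d ≥ 2, let G be a d-regular tree, let v be a vertex of G, and let n ≥ 1. The number of closed walks of length 2n in G starting and ending at v that visit v only at the start and at the end (i.e., v occurs in the walk exactly at positions 0 and 2n) equals d · (d-1)^(n-1) · catalan(n-1). -/
/-!
A closed walk at `y` that avoids a neighbour `x` of `y` is either trivial or splits at its first
return to `y` into a step to a neighbour `u ≠ x`, a closed walk at `u` avoiding `y`, the step
back, and a closed walk at `y` avoiding `x`; acyclicity forces the first return to use the edge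
`y u` again. Closed walks in a tree have even length, so the number of such walks of length `2m`
satisfies the Catalan recursion scaled by the `d - 1` choices of `u`, and equals
`(d - 1) ^ m * catalan m`. A walk returning to `v` only at its end is a step to one of the `d`
neighbours `u`, a closed walk at `u` avoiding `v`, and the step back.
-/

theorem List.eq_of_append_cons_eq_of_notMem {α : Type*} {a : α} {x₁ x₂ z₁ z₂ : List α}
    (h₁ : a ∉ x₁) (h₂ : a ∉ x₂) (h : x₁ ++ a :: z₁ = x₂ ++ a :: z₂) :
    x₁ = x₂ ∧ z₁ = z₂ := by
  induction x₁ generalizing x₂ with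
  | nil =>
    cases x₂ with
    | nil => simpa using h
    | cons c x₂ =>
      simp only [List.nil_append, List.cons_append, List.cons.injEq] at h
      simp [h.1] at h₂
  | cons b x₁ ih =>
    cases x₂ with
    | nil =>
      simp only [List.nil_append, List.cons_append, List.cons.injEq] at h
      simp [h.1] at h₁
    | cons c x₂ =>
      simp only [List.cons_append, List.cons.injEq, List.mem_cons, not_or] at h h₁ h₂
      obtain ⟨rfl, h⟩ := h
      simpa using ih h₁.2 h₂.2 h

namespace SimpleGraph

variable {V : Type*} {G : SimpleGraph V}

lemma IsAcyclic.eq_of_adj_of_notMem_support (hG : G.IsAcyclic) {y u b : V} (hu : G.Adj y u)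
    (hb : G.Adj y b) (p : G.Walk u b) (hy : y ∉ p.support) : u = b := by
  have hbridge := isBridge_iff_forall_walk_mem_edges.mp
    (isAcyclic_iff_forall_isBridge.mp hG (G.mem_edgeSet.mpr hb)) (.cons hu p)
  rw [Walk.edges_cons, List.mem_cons] at hbridge
  rcases hbridge with h | h
  · exact (Sym2.congr_right.mp h).symm
  · exact absurd (p.fst_mem_support_of_mem_edges h) hy

lemma IsAcyclic.notMem_support_of_adj (hG : G.IsAcyclic) {y u x w : V} (hu : G.Adj y u)
    (hx : G.Adj y x) (hux : u ≠ x) (p : G.Walk u w) (hy : y ∉ p.support) : x ∉ p.support := by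
  classical
  intro hxp
  exact hux <| hG.eq_of_adj_of_notMem_support hu hx (p.takeUntil x hxp)
    fun h ↦ hy (p.support_takeUntil_subset_support hxp h)

lemma IsAcyclic.even_length (hG : G.IsAcyclic) {u : V} (p : G.Walk u u) : Even p.length :=
  ((G.recolorOfEquiv finTwoEquiv hG.coloringTwo).even_length_iff_congr p).mpr Iff.rfl

namespace Walk

def excursion {y u : V} (h : G.Adj y u) (p : G.Walk u u) : G.Walk y y :=
  cons h (p.concat h.symm)

variable {y u u' z : V} {h : G.Adj y u} {h' : G.Adj y u'}

@[simp]
lemma length_excursion (p : G.Walk u u) : (excursion h p).length = p.length + 2 := by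
  simp [excursion]

lemma support_excursion_append (p : G.Walk u u) (q : G.Walk y z) :
    ((excursion h p).append q).support = y :: (p.support ++ q.support) := by
  rw [support_append, excursion, support_cons, support_concat, ← q.cons_tail_support]
  simp

lemma getVert_excursion_mem_support (p : G.Walk u u) {i : ℕ} (hi₀ : 0 < i)
    (hi : i < p.length + 2) : (excursion h p).getVert i ∈ p.support := by
  obtain ⟨j, rfl⟩ := Nat.exists_eq_add_of_lt hi₀
  rw [excursion, zero_add, getVert_cons_succ, concat_eq_append, getVert_append',
    if_pos (by omega)]
  exact p.getVert_mem_support j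

lemma eq_of_excursion_append_eq {p : G.Walk u u} {p' : G.Walk u' u'} {q q' : G.Walk y z}
    (hp : y ∉ p.support) (hp' : y ∉ p'.support)
    (he : (excursion h p).append q = (excursion h' p').append q') :
    u = u' ∧ p.support = p'.support ∧ q = q' := by
  have hs := congrArg support he
  rw [support_excursion_append, support_excursion_append, ← q.cons_tail_support,
    ← q'.cons_tail_support, List.cons.injEq] at hs
  obtain ⟨hpp, hqq⟩ := List.eq_of_append_cons_eq_of_notMem hp hp' hs.2
  refine ⟨?_, hpp, ext_support ?_⟩
  · rw [← p.cons_tail_support, ← p'.cons_tail_support, List.cons.injEq] at hpp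
    exact hpp.1
  · rw [← q.cons_tail_support, ← q'.cons_tail_support, hqq]

end Walk

open Walk in
lemma IsAcyclic.exists_eq_excursion_append (hG : G.IsAcyclic) {y : V} (P : G.Walk y y)
    (hP : ¬P.Nil) : ∃ (u : V) (h : G.Adj y u) (p : G.Walk u u) (q : G.Walk y y),
      y ∉ p.support ∧ P = (excursion h p).append q := by
  classical
  cases P with
  | nil => simp at hP
  | @cons _ u _ h t =>
    have hyt : y ∈ t.support := t.end_mem_support
    have hnil : ¬(t.takeUntil y hyt).Nil := fun hn ↦ h.ne hn.eq.symm
    obtain ⟨b, p, h', hp⟩ : ∃ (b : V) (p : G.Walk u b) (h' : G.Adj b y),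
        t.takeUntil y hyt = p.concat h' :=
      ⟨_, _, _, (concat_dropLast (adj_penultimate hnil)).symm⟩
    have hyp : y ∉ p.support := by
      have hcount := t.count_support_takeUntil_eq_one hyt
      rw [hp, support_concat, List.count_append] at hcount
      exact List.not_mem_of_count_eq_zero (by simpa using hcount)
    obtain rfl := hG.eq_of_adj_of_notMem_support h h'.symm p hyp
    refine ⟨u, h, p, t.dropUntil y hyt, hyp, ?_⟩
    rw [excursion, cons_append, ← hp, take_spec]

open Walk

abbrev loopsAvoiding (G : SimpleGraph V) (x y : V) (k : ℕ) : Type _ :=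
  {p : G.Walk y y // p.length = 2 * k ∧ x ∉ p.support}

instance [G.LocallyFinite] (x y : V) (k : ℕ) : Finite (G.loopsAvoiding x y k) := by
  classical
  exact Finite.of_injective (fun p ↦ (⟨p.1, p.2.1⟩ : {p : G.Walk y y // p.length = 2 * k}))
    fun _ _ h ↦ Subtype.ext (congrArg Subtype.val h :)

lemma card_loopsAvoiding_zero {x y : V} (hxy : x ≠ y) : Nat.card (G.loopsAvoiding x y 0) = 1 :=
  Nat.card_eq_one_iff_exists.mpr ⟨⟨nil, rfl, by simpa using hxy⟩, fun p ↦
    Subtype.ext (eq_nil_iff_nil.mpr (length_eq_zero_iff.mp p.2.1))⟩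

lemma card_loopsAvoiding_succ [DecidableEq V] [G.LocallyFinite] (hG : G.IsAcyclic) {x y : V}
    (hxy : G.Adj x y) (m : ℕ) :
    Nat.card (G.loopsAvoiding x y (m + 1)) =
      ∑ i : Fin (m + 1), ∑ u : (G.neighborFinset y).erase x,
        Nat.card (G.loopsAvoiding y u i) * Nat.card (G.loopsAvoiding x y (m - i)) := by
  have adj_of_mem {u : V} (hu : u ∈ (G.neighborFinset y).erase x) : G.Adj y u :=
    (G.mem_neighborFinset y u).mp (Finset.mem_of_mem_erase hu)
  let F : (Σ i : Fin (m + 1), Σ u : (G.neighborFinset y).erase x,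
      G.loopsAvoiding y u i × G.loopsAvoiding x y (m - i)) → G.loopsAvoiding x y (m + 1) :=
    fun ⟨i, u, p, q⟩ ↦ ⟨(excursion (adj_of_mem u.2) p.1).append q.1, by
      simp only [length_append, length_excursion, p.2.1, q.2.1]; omega, by
      rw [support_excursion_append, List.mem_cons, List.mem_append, not_or, not_or]
      exact ⟨hxy.ne, hG.notMem_support_of_adj (adj_of_mem u.2) hxy.symm
        (Finset.ne_of_mem_erase u.2) p.1 p.2.2, q.2.2⟩⟩
  refine Nat.card_eq_of_bijective F ⟨?_, ?_⟩ |>.symm.trans ?_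
  · rintro ⟨i, ⟨u, hu⟩, p, q⟩ ⟨i', ⟨u', hu'⟩, p', q'⟩ he
    obtain ⟨rfl, hpp, hqq⟩ := eq_of_excursion_append_eq p.2.2 p'.2.2 (congrArg Subtype.val he)
    obtain rfl : i = i' := Fin.ext <| by
      have := congrArg List.length hpp
      simp only [length_support, p.2.1, p'.2.1] at this
      omega
    obtain rfl : p = p' := Subtype.ext (ext_support hpp)
    obtain rfl : q = q' := Subtype.ext hqq
    rfl
  · rintro ⟨P, hPlen, hxP⟩
    obtain ⟨u, h, p, q, hyp, rfl⟩ := hG.exists_eq_excursion_append P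
      (fun hn ↦ by simp [← length_eq_zero_iff] at hn; omega)
    rw [support_excursion_append, List.mem_cons, List.mem_append, not_or, not_or] at hxP
    obtain ⟨i, hi⟩ := (hG.even_length p).two_dvd
    have hu : u ∈ (G.neighborFinset y).erase x :=
      Finset.mem_erase.mpr ⟨fun hux ↦ hxP.2.1 (hux ▸ p.start_mem_support), by simpa using h⟩
    simp only [length_append, length_excursion] at hPlen
    exact ⟨⟨⟨i, by omega⟩, ⟨u, hu⟩, ⟨p, hi, hyp⟩, ⟨q, by simp only; omega, hxP.2.2⟩⟩,
      rfl⟩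
  simp only [Nat.card_sigma, Nat.card_prod]

lemma card_neighborFinset_erase [DecidableEq V] [G.LocallyFinite] {d : ℕ}
    (hreg : G.IsRegularOfDegree d) {x y : V} (hxy : G.Adj x y) :
    ((G.neighborFinset y).erase x).card = d - 1 := by
  rw [Finset.card_erase_of_mem ((G.mem_neighborFinset y x).mpr hxy.symm),
    card_neighborFinset_eq_degree, hreg y]

theorem card_loopsAvoiding [G.LocallyFinite] (hG : G.IsAcyclic) {d : ℕ}
    (hreg : G.IsRegularOfDegree d) (m : ℕ) {x y : V} (hxy : G.Adj x y) :
    Nat.card (G.loopsAvoiding x y m) = (d - 1) ^ m * catalan m := by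
  classical
  induction m using Nat.strong_induction_on generalizing x y with
  | _ m ih =>
  cases m with
  | zero => simp [card_loopsAvoiding_zero hxy.ne]
  | succ m =>
    have hsummand (i : Fin (m + 1)) (u : (G.neighborFinset y).erase x) :
        Nat.card (G.loopsAvoiding y u i) * Nat.card (G.loopsAvoiding x y (m - i)) =
          (d - 1) ^ m * (catalan i * catalan (m - i)) := by
      have hu := (G.mem_neighborFinset y u).mp (Finset.mem_of_mem_erase u.2)
      rw [ih i (by omega) hu, ih (m - i) (by omega) hxy,
        ← pow_mul_pow_sub _ (Nat.lt_succ_iff.mp i.2)]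
      ring
    simp only [card_loopsAvoiding_succ hG hxy, hsummand, Finset.sum_const, Finset.card_univ,
      Fintype.card_coe, card_neighborFinset_erase hreg hxy, smul_eq_mul, ← Finset.mul_sum,
      catalan_succ, pow_succ]
    ring

theorem card_firstReturnLoops [G.LocallyFinite] (hG : G.IsAcyclic) {d : ℕ}
    (hreg : G.IsRegularOfDegree d) (v : V) {n : ℕ} (hn : 1 ≤ n) :
    Nat.card {p : G.Walk v v // p.length = 2 * n ∧
        ∀ i : ℕ, 0 < i → i < 2 * n → p.getVert i ≠ v} =
      d * ((d - 1) ^ (n - 1) * catalan (n - 1)) := by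
  classical
  let F : (Σ u : G.neighborFinset v, G.loopsAvoiding v u (n - 1)) →
      {p : G.Walk v v // p.length = 2 * n ∧
        ∀ i : ℕ, 0 < i → i < 2 * n → p.getVert i ≠ v} :=
    fun ⟨u, p⟩ ↦ ⟨excursion ((G.mem_neighborFinset v u).mp u.2) p.1,
      by rw [length_excursion, p.2.1]; omega,
      fun _ hi₀ hi ↦ ne_of_mem_of_not_mem
        (getVert_excursion_mem_support p.1 hi₀ (by rw [p.2.1]; omega)) p.2.2⟩
  refine Nat.card_eq_of_bijective F ⟨?_, ?_⟩ |>.symm.trans ?_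
  · rintro ⟨⟨u, hu⟩, p⟩ ⟨⟨u', hu'⟩, p'⟩ he
    obtain ⟨rfl, hpp, -⟩ := eq_of_excursion_append_eq (q := nil) (q' := nil) p.2.2 p'.2.2
      (by rw [append_nil, append_nil]; exact congrArg Subtype.val he)
    obtain rfl : p = p' := Subtype.ext (ext_support hpp)
    rfl
  · rintro ⟨P, hPlen, hP⟩
    obtain ⟨u, h, p, q, hvp, rfl⟩ := hG.exists_eq_excursion_append P
      (fun hn ↦ by simp [← length_eq_zero_iff] at hn; omega)
    simp only [length_append, length_excursion] at hPlen
    obtain rfl : q = nil := by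
      refine eq_nil_iff_nil.mpr (length_eq_zero_iff.mp (Nat.eq_zero_of_not_pos fun hq ↦ ?_))
      have hret := hP (p.length + 2) (by omega) (by omega)
      rw [getVert_append, length_excursion, if_neg (lt_irrefl _), Nat.sub_self,
        getVert_zero] at hret
      exact hret rfl
    rw [length_nil] at hPlen
    exact ⟨⟨⟨u, by simpa using h⟩, ⟨p, by omega, hvp⟩⟩,
      Subtype.ext (append_nil _).symm⟩
  · rw [Nat.card_sigma, Finset.sum_congr rfl fun (u : G.neighborFinset v) _ ↦
      card_loopsAvoiding hG hreg (n - 1) ((G.mem_neighborFinset v u).mp u.2),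
      Finset.sum_const, Finset.card_univ, Fintype.card_coe, card_neighborFinset_eq_degree,
      hreg v, smul_eq_mul]

end SimpleGraph

/-- On a `d`-regular tree (`d ≥ 2`), the number of closed walks of length `2n`
starting and ending at `v` that visit `v` only at the start and the end equals
`d * (d-1)^(n-1) * catalan (n-1)`. -/
theorem stmt_0 (d : ℕ) (hd : 2 ≤ d) {V : Type*} (G : SimpleGraph V)
    [∀ w : V, Fintype (G.neighborSet w)]
    (hconn : G.Connected) (hacyc : G.IsAcyclic)
    (hreg : ∀ w : V, G.degree w = d)
    (v : V) (n : ℕ) (hn : 1 ≤ n) :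
    Nat.card {p : G.Walk v v // p.length = 2 * n ∧
        ∀ i : ℕ, 0 < i → i < 2 * n → p.getVert i ≠ v} =
      d * (d - 1) ^ (n - 1) * catalan (n - 1) := by
  rw [mul_assoc]
  exact G.card_firstReturnLoops hacyc hreg v hn
end

section
/- Let d ≥ 2, let G be a d-regular tree, let v be a vertex of G, and let n ≥ 0. The number of closed walks of length 2n in G starting and ending at v equals ∑_{k=0}^{n} (binom(2n, k) - binom(2n, k-1)) · (d-1)^k, where binom(2n, -1) = 0. -/
/-!
On a tree rooted at `v`, the number of walks of length `L` from `u` to `v` depends only on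
`m = dist v u`: all `d` neighbours of the root are one step farther from it, while any other vertex
has exactly one neighbour closer to the root and `d - 1` farther away. This gives the recursion
`treeWalkCount` in `x = d - 1`. At `L = m + 2K` its value is the partial sum
`∑_{j ≤ K} (C(L,j) - C(L,j-1)) x^j`: Pascal's rule for these ballot numbers matches a step away
from the root, and the vanishing of the middle one, `C(2t+1,t+1) - C(2t+1,t)`, produces the
factor `x + 1` of a step at the root.
-/

open Finset

def ballot (L : ℕ) : ℕ → ℤ
  | 0 => 1
  | j + 1 => L.choose (j + 1) - L.choose j

@[simp]
theorem ballot_zero (L : ℕ) : ballot L 0 = 1 := rfl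

theorem ballot_succ_succ (L j : ℕ) : ballot (L + 1) (j + 1) = ballot L (j + 1) + ballot L j := by
  rcases j with _ | j
  · simp [ballot]
  · simp only [ballot, Nat.choose_succ_succ' L (j + 1), Nat.choose_succ_succ' L j]
    push_cast
    ring

theorem ballot_two_mul_add_one (t : ℕ) : ballot (2 * t + 1) (t + 1) = 0 := by
  simp [ballot, Nat.choose_symm_half]

def ballotSum (x : ℤ) (L K : ℕ) : ℤ :=
  ∑ j ∈ range (K + 1), ballot L j * x ^ j

theorem ballotSum_succ_succ (x : ℤ) (L K : ℕ) :
    ballotSum x (L + 1) (K + 1) = ballotSum x L (K + 1) + x * ballotSum x L K := by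
  have hshift : ∑ j ∈ range (K + 1), ballot L j * x ^ (j + 1) = x * ballotSum x L K := by
    rw [ballotSum, mul_sum]
    exact sum_congr rfl fun j _ => by ring
  simp only [ballotSum, sum_range_succ' _ (K + 1), ballot_succ_succ, add_mul, sum_add_distrib,
    hshift, ballot_zero]
  ring

theorem ballotSum_two_mul_add_two (x : ℤ) (t : ℕ) :
    ballotSum x (2 * t + 2) (t + 1) = (x + 1) * ballotSum x (2 * t + 1) t := by
  have hmid : ballotSum x (2 * t + 1) (t + 1) = ballotSum x (2 * t + 1) t := by
    rw [ballotSum, sum_range_succ, ballot_two_mul_add_one, zero_mul, add_zero, ballotSum]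
  rw [ballotSum_succ_succ, hmid]
  ring

def treeWalkCount (x : ℤ) : ℕ → ℕ → ℤ
  | 0, m => if m = 0 then 1 else 0
  | L + 1, 0 => (x + 1) * treeWalkCount x L 1
  | L + 1, m + 1 => treeWalkCount x L m + x * treeWalkCount x L (m + 2)

theorem treeWalkCount_of_lt (x : ℤ) {L m : ℕ} (h : L < m) : treeWalkCount x L m = 0 := by
  induction L generalizing m with
  | zero => simp [treeWalkCount, h.ne']
  | succ L ih =>
    obtain ⟨m, rfl⟩ := Nat.exists_eq_add_of_lt h
    rw [show L + 1 + m + 1 = (L + m + 1) + 1 by ring, treeWalkCount, ih (by omega), ih (by omega)]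
    ring

theorem treeWalkCount_self (x : ℤ) (m : ℕ) : treeWalkCount x m m = 1 := by
  induction m with
  | zero => rfl
  | succ m ih => rw [treeWalkCount, ih, treeWalkCount_of_lt x (by omega), mul_zero, add_zero]

theorem treeWalkCount_add_two_mul (x : ℤ) (m K : ℕ) :
    treeWalkCount x (m + 2 * K) m = ballotSum x (m + 2 * K) K := by
  induction K generalizing m with
  | zero => simp [treeWalkCount_self, ballotSum]
  | succ K ih =>
    induction m with
    | zero =>
      calc treeWalkCount x (0 + 2 * (K + 1)) 0 = (x + 1) * treeWalkCount x (1 + 2 * K) 1 := by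
            rw [show 0 + 2 * (K + 1) = 1 + 2 * K + 1 by ring, treeWalkCount]
        _ = ballotSum x (0 + 2 * (K + 1)) (K + 1) := by
            rw [ih, add_comm 1, ← ballotSum_two_mul_add_two]
            congr 1
            ring
    | succ m ihm =>
      rw [show m + 1 + 2 * (K + 1) = m + 2 * (K + 1) + 1 by ring, treeWalkCount, ihm,
        show m + 2 * (K + 1) = m + 2 + 2 * K by ring, ih, ballotSum_succ_succ]

namespace SimpleGraph

variable {V : Type*} {G : SimpleGraph V}

def walkLengthSuccEquiv (u v : V) (L : ℕ) :
    {p : G.Walk u v // p.length = L + 1} ≃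
      Σ w : G.neighborSet u, {q : G.Walk w v // q.length = L} where
  toFun p := match p with
    | ⟨.cons h q, hq⟩ => ⟨⟨_, h⟩, q, by simpa using hq⟩
  invFun s := ⟨.cons ((G.mem_neighborSet u _).1 s.1.2) s.2.1, by simp [s.2.2]⟩
  left_inv | ⟨.cons _ _, _⟩ => rfl
  right_inv _ := rfl

theorem card_walk_length_zero (u v : V) [Decidable (u = v)] :
    Nat.card {p : G.Walk u v // p.length = 0} = if u = v then 1 else 0 := by
  split_ifs with huv
  · subst huv
    exact Nat.card_eq_one_iff_unique.mpr ⟨⟨fun p q => Subtype.ext <| by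
      rw [(Walk.length_eq_zero_iff.1 p.2).eq_nil, (Walk.length_eq_zero_iff.1 q.2).eq_nil]⟩,
      ⟨⟨.nil, rfl⟩⟩⟩
  · have : IsEmpty {p : G.Walk u v // p.length = 0} :=
      ⟨fun p => huv (Walk.eq_of_length_eq_zero p.2)⟩
    exact Nat.card_of_isEmpty

theorem card_walk_length_succ [G.LocallyFinite] (u v : V) (L : ℕ) :
    Nat.card {p : G.Walk u v // p.length = L + 1} =
      ∑ w ∈ G.neighborFinset u, Nat.card {q : G.Walk w v // q.length = L} := by
  classical
  rw [Nat.card_congr (walkLengthSuccEquiv u v L), Nat.card_sigma, neighborFinset_def]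
  exact sum_set_coe (f := fun w => Nat.card {q : G.Walk w v // q.length = L}) _

theorem IsTree.existsUnique_adj_dist_add_one_eq (hG : G.IsTree) {u v : V} (huv : u ≠ v) :
    ∃! w, G.Adj u w ∧ G.dist v w + 1 = G.dist v u := by
  obtain ⟨p, hp, hlen⟩ := hG.connected.exists_path_of_dist u v
  cases p with
  | nil => exact absurd rfl huv
  | @cons _ w _ hadj q =>
    rw [Walk.length_cons, dist_comm] at hlen
    refine ⟨w, ⟨hadj, ?_⟩, fun w' ⟨hadj', hw'⟩ => ?_⟩
    · have hle : G.dist v w ≤ q.length := dist_comm (G := G) ▸ dist_le q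
      have := hG.dist_eq_dist_add_one_of_adj v hadj
      omega
    · obtain ⟨q', -, hlen'⟩ := hG.connected.exists_path_of_dist w' v
      have hpath' : (Walk.cons hadj' q').IsPath := by
        refine Walk.isPath_of_length_eq_dist _ ?_
        rw [Walk.length_cons, hlen', dist_comm, hw', dist_comm]
      have := congrArg (fun r : G.Path u v => r.1.snd)
        ((hG.isAcyclic.subsingleton_path u v).elim ⟨_, hp⟩ ⟨_, hpath'⟩)
      simpa using this.symm

theorem IsTree.sum_neighborFinset_dist [G.LocallyFinite] (hG : G.IsTree) {d : ℕ}
    (hd : G.IsRegularOfDegree d) (f : ℕ → ℤ) {u v : V} {m : ℕ} (hm : G.dist v u = m + 1) :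
    ∑ w ∈ G.neighborFinset u, f (G.dist v w) = f m + ((d : ℤ) - 1) * f (m + 2) := by
  classical
  have huv : u ≠ v := by rintro rfl; simp at hm
  obtain ⟨w₀, hw₀, huniq⟩ := hG.existsUnique_adj_dist_add_one_eq huv
  have hdown : {w ∈ G.neighborFinset u | G.dist v w + 1 = G.dist v u} = {w₀} := by
    ext w
    simp only [mem_filter, mem_neighborFinset, mem_singleton]
    exact ⟨huniq w, fun h => h ▸ hw₀⟩
  have hup : ∀ w ∈ {w ∈ G.neighborFinset u | ¬ G.dist v w + 1 = G.dist v u},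
      G.dist v w = m + 2 := by
    intro w hw
    rw [mem_filter, mem_neighborFinset] at hw
    have := hG.dist_eq_dist_add_one_of_adj v hw.1
    omega
  have hcard := card_filter_add_card_filter_not (s := G.neighborFinset u)
    (p := fun w => G.dist v w + 1 = G.dist v u)
  rw [hdown, card_singleton, card_neighborFinset_eq_degree, hd u] at hcard
  rw [← sum_filter_add_sum_filter_not _ (fun w => G.dist v w + 1 = G.dist v u), hdown,
    sum_singleton, sum_congr rfl fun w hw => congrArg f (hup w hw), sum_const, nsmul_eq_mul,
    show G.dist v w₀ = m by omega]
  congr 2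
  omega

theorem IsTree.card_walk_length_eq [G.LocallyFinite] (hG : G.IsTree) {d : ℕ}
    (hd : G.IsRegularOfDegree d) (v : V) (L : ℕ) (u : V) :
    (Nat.card {p : G.Walk u v // p.length = L} : ℤ) =
      treeWalkCount ((d : ℤ) - 1) L (G.dist v u) := by
  classical
  induction L generalizing u with
  | zero =>
    simp only [card_walk_length_zero, treeWalkCount, hG.connected.dist_eq_zero_iff,
      eq_comm (a := v)]
    split_ifs <;> rfl
  | succ L ih =>
    rw [card_walk_length_succ, Nat.cast_sum, sum_congr rfl fun w _ => ih w]
    rcases h : G.dist v u with _ | m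
    · obtain rfl : v = u := hG.connected.dist_eq_zero_iff.1 h
      have hnbr : ∀ w ∈ G.neighborFinset v, G.dist v w = 1 := fun w hw =>
        dist_eq_one_iff_adj.2 ((mem_neighborFinset _ _ _).1 hw)
      rw [sum_congr rfl fun w hw => congrArg _ (hnbr w hw), sum_const,
        card_neighborFinset_eq_degree, hd v, nsmul_eq_mul, treeWalkCount]
      ring
    · rw [hG.sum_neighborFinset_dist hd _ h, treeWalkCount]

end SimpleGraph

/-- On a `d`-regular tree, the number of closed walks of length `2n` at a vertex `v`
equals `∑_{k=0}^{n} (binom(2n,k) - binom(2n,k-1)) * (d-1)^k`, with the convention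
`binom(2n,-1) = 0`. -/
theorem stmt_3 (d : ℕ) (hd : 2 ≤ d) {V : Type*} (G : SimpleGraph V)
    [∀ w : V, Fintype (G.neighborSet w)]
    (hconn : G.Connected) (hacyc : G.IsAcyclic)
    (hreg : ∀ w : V, G.degree w = d)
    (v : V) (n : ℕ) :
    (Nat.card {p : G.Walk v v // p.length = 2 * n} : ℤ) =
      ∑ k ∈ Finset.range (n + 1),
        (((2 * n).choose k : ℤ) - if k = 0 then 0 else ((2 * n).choose (k - 1) : ℤ)) *
          ((d : ℤ) - 1) ^ k := by
  rw [SimpleGraph.IsTree.card_walk_length_eq ⟨hconn, hacyc⟩ hreg, SimpleGraph.dist_self,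
    ← zero_add (2 * n), treeWalkCount_add_two_mul, zero_add, ballotSum]
  refine sum_congr rfl fun k _ => ?_
  cases k <;> simp [ballot]
end

section
/- Let N ≥ 0 and let k be an integer with 0 ≤ 2k ≤ N. The number of lists of length N with entries in {1, -1} such that every partial sum (sum of any initial segment) is nonnegative and the total sum equals N - 2k is binom(N, k) - binom(N, k-1), where binom(N, -1) = 0. (Equivalently, the number of weak Dyck paths from (0,0) to (N, N-2k), which equals the number of standard Young tableaux of shape (N-k, k).) -/
def DyckSet (N : ℕ) (m : ℤ) : Set (List ℤ) :=
  {l | l.length = N ∧ (∀ x ∈ l, x = 1 ∨ x = -1) ∧ (∀ i : ℕ, 0 ≤ (l.take i).sum) ∧ l.sum = m}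

lemma finite_pm : ∀ N : ℕ, {l : List ℤ | l.length = N ∧ ∀ x ∈ l, x = 1 ∨ x = -1}.Finite := by
  intro N
  induction N with
  | zero =>
      apply Set.Finite.subset (Set.finite_singleton ([] : List ℤ))
      intro l hl
      simp only [Set.mem_setOf_eq] at hl
      simp [List.length_eq_zero_iff.mp hl.1]
  | succ n ih =>
      have hsub : {l : List ℤ | l.length = n + 1 ∧ ∀ x ∈ l, x = 1 ∨ x = -1} ⊆
          ((fun l => (1 : ℤ) :: l) '' {l | l.length = n ∧ ∀ x ∈ l, x = 1 ∨ x = -1}) ∪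
          ((fun l => (-1 : ℤ) :: l) '' {l | l.length = n ∧ ∀ x ∈ l, x = 1 ∨ x = -1}) := by
        rintro (_ | ⟨a, t⟩) ⟨hlen, hmem⟩
        · simp at hlen
        · rcases hmem a (by simp) with h | h
          · left; exact ⟨t, ⟨by simpa using hlen, fun x hx => hmem x (by simp [hx])⟩, by rw [h]⟩
          · right; exact ⟨t, ⟨by simpa using hlen, fun x hx => hmem x (by simp [hx])⟩, by rw [h]⟩
      exact Set.Finite.subset ((ih.image _).union (ih.image _)) hsub

lemma dyck_finite (N : ℕ) (m : ℤ) : (DyckSet N m).Finite :=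
  Set.Finite.subset (finite_pm N) (fun _ hl => ⟨hl.1, hl.2.1⟩)

lemma dyck_neg (N : ℕ) (m : ℤ) (hm : m < 0) : DyckSet N m = ∅ := by
  ext l
  simp only [DyckSet, Set.mem_setOf_eq, Set.mem_empty_iff_false, iff_false]
  rintro ⟨hlen, _, hpre, hsum⟩
  have h := hpre l.length
  rw [List.take_length] at h
  omega

lemma dyck_big (N : ℕ) (m : ℤ) (hm : (N : ℤ) < m) : DyckSet N m = ∅ := by
  ext l
  simp only [DyckSet, Set.mem_setOf_eq, Set.mem_empty_iff_false, iff_false]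
  rintro ⟨hlen, hmem, _, hsum⟩
  have h : l.sum ≤ l.length • (1 : ℤ) :=
    List.sum_le_card_nsmul l 1 (fun x hx => by rcases hmem x hx with h | h <;> simp [h])
  simp only [nsmul_eq_mul, mul_one] at h
  rw [hlen] at h
  omega

lemma dyck_zero : DyckSet 0 0 = {([] : List ℤ)} := by
  ext l
  constructor
  · rintro ⟨hlen, _, _, _⟩
    simpa using List.length_eq_zero_iff.mp hlen
  · rintro rfl
    exact ⟨rfl, by simp, by simp, by simp⟩

lemma dyck_step (N : ℕ) (m : ℤ) (hm : 0 ≤ m) :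
    (DyckSet (N + 1) m).ncard = (DyckSet N (m - 1)).ncard + (DyckSet N (m + 1)).ncard := by
  have hback : ∀ (c : ℤ) (l' : List ℤ), l' ∈ DyckSet N (m - c) → (c = 1 ∨ c = -1) →
      (l' ++ [c]) ∈ DyckSet (N + 1) m := by
    rintro c l' ⟨hlen, hmem, hpre, hsum⟩ hc
    refine ⟨by simp [hlen], ?_, ?_, by simp [hsum]⟩
    · intro x hx
      rcases List.mem_append.mp hx with h | h
      · exact hmem x h
      · simp at h; omega
    · intro i
      rw [List.take_append, List.sum_append]
      rcases le_or_gt i N with h | h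
      · rw [hlen]
        have h0 : i - N = 0 := by omega
        rw [h0]
        simpa using hpre i
      · rw [List.take_of_length_le (by omega), hlen]
        have h1 : List.take (i - N) [c] = [c] :=
          List.take_of_length_le (by simp; omega)
        rw [h1]
        simp only [List.sum_cons, List.sum_nil, add_zero, hsum]
        omega
  have hset : DyckSet (N + 1) m =
      ((· ++ [(1 : ℤ)]) '' DyckSet N (m - 1)) ∪ ((· ++ [(-1 : ℤ)]) '' DyckSet N (m + 1)) := by
    ext l
    constructor
    · rintro ⟨hlen, hmem, hpre, hsum⟩
      have hne : l ≠ [] := by intro h; simp [h] at hlen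
      set c := l.getLast hne with hc
      have hdec : l.dropLast ++ [c] = l := List.dropLast_append_getLast hne
      have hcl : c ∈ l := List.getLast_mem hne
      have hdl : l.dropLast ∈ DyckSet N (m - c) := by
        refine ⟨by simp [hlen], ?_, ?_, ?_⟩
        · exact fun x hx => hmem x ((List.dropLast_sublist l).subset hx)
        · intro i
          rw [List.dropLast_eq_take, List.take_take]
          exact hpre _
        · have := congrArg List.sum hdec
          simp at this
          omega
      rcases hmem c hcl with h | h
      · left
        refine ⟨l.dropLast, ?_, ?_⟩
        · rw [← h]; exact hdl
        · show l.dropLast ++ [(1 : ℤ)] = l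
          rw [← h]; exact hdec
      · right
        refine ⟨l.dropLast, ?_, ?_⟩
        · have e : m + 1 = m - c := by rw [h]; ring
          rw [e]; exact hdl
        · show l.dropLast ++ [(-1 : ℤ)] = l
          rw [← h]; exact hdec
    · rintro (⟨l', hl', rfl⟩ | ⟨l', hl', rfl⟩)
      · exact hback 1 l' hl' (Or.inl rfl)
      · have e : m + 1 = m - (-1) := by ring
        rw [e] at hl'
        exact hback (-1) l' hl' (Or.inr rfl)
  have hdisj : Disjoint ((· ++ [(1 : ℤ)]) '' DyckSet N (m - 1))
      ((· ++ [(-1 : ℤ)]) '' DyckSet N (m + 1)) := by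
    rw [Set.disjoint_left]
    rintro l ⟨a, _, rfl⟩ ⟨b, _, hb⟩
    have := congrArg (fun l => List.getLast? l) hb
    simp at this
  rw [hset, Set.ncard_union_eq hdisj ((dyck_finite _ _).image _) ((dyck_finite _ _).image _),
    Set.ncard_image_of_injective _ (List.append_left_injective _),
    Set.ncard_image_of_injective _ (List.append_left_injective _)]

lemma ballot_pascal (n j : ℕ) :
    (((n + 1).choose (j + 1) : ℤ) - ((n + 1).choose (j + 1 - 1) : ℤ))
      = ((n.choose (j + 1) : ℤ) - (n.choose (j + 1 - 1) : ℤ))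
        + ((n.choose j : ℤ) - if j = 0 then 0 else (n.choose (j - 1) : ℤ)) := by
  rcases Nat.eq_zero_or_pos j with rfl | hj
  · simp only [Nat.add_sub_cancel, if_pos rfl]
    have p := Nat.choose_succ_succ' n 0
    push_cast [p]
    simp [Nat.choose_zero_right]
  · obtain ⟨i, rfl⟩ : ∃ i, j = i + 1 := ⟨j - 1, by omega⟩
    simp only [Nat.add_sub_cancel, if_neg (Nat.succ_ne_zero i)]
    have p1 := Nat.choose_succ_succ' n (i + 1)
    have p2 := Nat.choose_succ_succ' n i
    push_cast [p1, p2]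
    ring

lemma ballot_pascal0 (n j : ℕ) (hn : n = 2 * j + 1) :
    (((n + 1).choose (j + 1) : ℤ) - ((n + 1).choose (j + 1 - 1) : ℤ))
      = (n.choose j : ℤ) - if j = 0 then 0 else (n.choose (j - 1) : ℤ) := by
  subst hn
  have hsymm : (2 * j + 1).choose (j + 1) = (2 * j + 1).choose j := by
    have h1 : j + 1 ≤ 2 * j + 1 := by omega
    have h := Nat.choose_symm h1
    rw [show 2 * j + 1 - (j + 1) = j from by omega] at h
    exact h.symm
  rcases Nat.eq_zero_or_pos j with rfl | hj
  · norm_num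
  · obtain ⟨i, rfl⟩ : ∃ i, j = i + 1 := ⟨j - 1, by omega⟩
    simp only [Nat.add_sub_cancel, if_neg (Nat.succ_ne_zero i)]
    have p1 := Nat.choose_succ_succ' (2 * (i + 1) + 1) (i + 1)
    have p2 := Nat.choose_succ_succ' (2 * (i + 1) + 1) i
    zify at p1 p2 hsymm
    omega

lemma dyck_count : ∀ N k : ℕ, 2 * k ≤ N →
    ((DyckSet N ((N : ℤ) - 2 * k)).ncard : ℤ) =
      (N.choose k : ℤ) - if k = 0 then 0 else (N.choose (k - 1) : ℤ) := by
  intro N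
  induction N with
  | zero =>
      intro k hk
      have hk0 : k = 0 := by omega
      subst hk0
      simp [dyck_zero]
  | succ n ih =>
      intro k hk
      rcases Nat.eq_zero_or_pos k with rfl | hkpos
      · -- k = 0
        have hm : (0 : ℤ) ≤ ((n + 1 : ℕ) : ℤ) - 2 * ((0 : ℕ) : ℤ) := by omega
        have hstep := dyck_step n (((n + 1 : ℕ) : ℤ) - 2 * ((0 : ℕ) : ℤ)) hm
        have e1 : ((n + 1 : ℕ) : ℤ) - 2 * ((0 : ℕ) : ℤ) - 1 = (n : ℤ) - 2 * ((0 : ℕ) : ℤ) := by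
          push_cast; ring
        have e2 : ((n + 1 : ℕ) : ℤ) - 2 * ((0 : ℕ) : ℤ) + 1 = (n : ℤ) + 2 := by
          push_cast; ring
        rw [e1, e2, dyck_big n ((n : ℤ) + 2) (by omega)] at hstep
        simp only [Set.ncard_empty, add_zero] at hstep
        have ih1 := ih 0 (by omega)
        have hstepZ : ((DyckSet (n + 1) (((n + 1 : ℕ) : ℤ) - 2 * ((0 : ℕ) : ℤ))).ncard : ℤ)
            = ((DyckSet n ((n : ℤ) - 2 * ((0 : ℕ) : ℤ))).ncard : ℤ) := by exact_mod_cast hstep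
        rw [if_pos rfl] at ih1 ⊢
        rw [hstepZ, ih1]
        simp
      · -- k ≥ 1
        obtain ⟨j, rfl⟩ : ∃ j, k = j + 1 := ⟨k - 1, by omega⟩
        have hm : (0 : ℤ) ≤ ((n + 1 : ℕ) : ℤ) - 2 * ((j + 1 : ℕ) : ℤ) := by
          push_cast; omega
        have hstep := dyck_step n (((n + 1 : ℕ) : ℤ) - 2 * ((j + 1 : ℕ) : ℤ)) hm
        rw [if_neg (Nat.succ_ne_zero j)]
        rcases le_or_gt (2 * (j + 1)) n with h2k | h2k
        · -- interior case
          have e1 : ((n + 1 : ℕ) : ℤ) - 2 * ((j + 1 : ℕ) : ℤ) - 1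
              = (n : ℤ) - 2 * ((j + 1 : ℕ) : ℤ) := by push_cast; ring
          have e2 : ((n + 1 : ℕ) : ℤ) - 2 * ((j + 1 : ℕ) : ℤ) + 1
              = (n : ℤ) - 2 * ((j : ℕ) : ℤ) := by push_cast; ring
          rw [e1, e2] at hstep
          have ih1 := ih (j + 1) h2k
          have ih2 := ih j (by omega)
          have hstepZ : ((DyckSet (n + 1) (((n + 1 : ℕ) : ℤ) - 2 * ((j + 1 : ℕ) : ℤ))).ncard : ℤ)
              = ((DyckSet n ((n : ℤ) - 2 * ((j + 1 : ℕ) : ℤ))).ncard : ℤ)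
                + ((DyckSet n ((n : ℤ) - 2 * ((j : ℕ) : ℤ))).ncard : ℤ) := by
            exact_mod_cast hstep
          rw [if_neg (Nat.succ_ne_zero j)] at ih1
          rw [hstepZ, ih1, ih2]
          exact (ballot_pascal n j).symm
        · -- boundary case n + 1 = 2 * (j + 1)
          have hn : n = 2 * j + 1 := by omega
          have e1 : DyckSet n (((n + 1 : ℕ) : ℤ) - 2 * ((j + 1 : ℕ) : ℤ) - 1) = ∅ :=
            dyck_neg n _ (by push_cast; omega)
          have e2 : ((n + 1 : ℕ) : ℤ) - 2 * ((j + 1 : ℕ) : ℤ) + 1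
              = (n : ℤ) - 2 * ((j : ℕ) : ℤ) := by push_cast; omega
          rw [e1, e2] at hstep
          simp only [Set.ncard_empty, zero_add] at hstep
          have ih2 := ih j (by omega)
          have hstepZ : ((DyckSet (n + 1) (((n + 1 : ℕ) : ℤ) - 2 * ((j + 1 : ℕ) : ℤ))).ncard : ℤ)
              = ((DyckSet n ((n : ℤ) - 2 * ((j : ℕ) : ℤ))).ncard : ℤ) := by
            exact_mod_cast hstep
          rw [hstepZ, ih2]
          exact (ballot_pascal0 n j hn).symm

/-- The number of lists of length `N` with entries in `{1, -1}` all of whose partial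
sums are nonnegative and whose total sum is `N - 2k` (for `0 ≤ 2k ≤ N`) is
`binom(N,k) - binom(N,k-1)`, with the convention `binom(N,-1) = 0`. These are the weak
Dyck paths from `(0,0)` to `(N, N-2k)`, counted by standard Young tableaux of shape
`(N-k, k)`. -/
theorem stmt_6 (N k : ℕ) (hk : 2 * k ≤ N) :
    (Nat.card {l : List ℤ // l.length = N ∧ (∀ x ∈ l, x = 1 ∨ x = -1) ∧
        (∀ i : ℕ, 0 ≤ (l.take i).sum) ∧ l.sum = (N : ℤ) - 2 * k} : ℤ) =
      (N.choose k : ℤ) - if k = 0 then 0 else (N.choose (k - 1) : ℤ) := by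
  have h : Nat.card {l : List ℤ // l.length = N ∧ (∀ x ∈ l, x = 1 ∨ x = -1) ∧
      (∀ i : ℕ, 0 ≤ (l.take i).sum) ∧ l.sum = (N : ℤ) - 2 * k} =
      (DyckSet N ((N : ℤ) - 2 * k)).ncard := rfl
  rw [h]
  exact dyck_count N k hk
end

section
/- For n ≥ 1, the number of lists of length 2n with entries in {1, -1} whose total sum is 0 and all of whose proper nonempty partial sums (sums of initial segments of length 1, …, 2n-1) are strictly positive equals catalan(n-1). (Equivalently, the number of irreducible Dyck paths of length 2n, i.e., Dyck paths that return to the axis only at the end, is the (n-1)-st Catalan number.) -/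
/-!
Reading `1` as an up step and `-1` as a down step, an integer list with the stated properties
is exactly a nested Dyck word `U w D` (`w` a Dyck word) of semilength `n`: strict positivity
of the interior prefix sums says the path returns to the axis only at its end. Removing the
outer pair of steps is a bijection onto Dyck words of semilength `n - 1`, which are counted by
`catalan (n - 1)`.
-/

open List

namespace DyckStep

def toInt : DyckStep → ℤ
  | U => 1
  | D => -1

def ofInt (x : ℤ) : DyckStep := if x = 1 then U else D

@[simp]
lemma ofInt_toInt (s : DyckStep) : ofInt s.toInt = s := by
  cases s <;> simp [toInt, ofInt]

@[simp]
lemma ofInt_comp_toInt : ofInt ∘ toInt = id :=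
  funext ofInt_toInt

lemma toInt_ofInt {x : ℤ} (hx : x = 1 ∨ x = -1) : (ofInt x).toInt = x := by
  rcases hx with rfl | rfl <;> simp [toInt, ofInt]

lemma map_toInt_map_ofInt {m : List ℤ} (hm : ∀ x ∈ m, x = 1 ∨ x = -1) :
    (m.map ofInt).map toInt = m := by
  rw [map_map]
  exact (map_congr_left fun x hx => toInt_ofInt (hm x hx)).trans (map_id' m)

lemma toInt_eq_one_or_neg_one (s : DyckStep) : s.toInt = 1 ∨ s.toInt = -1 := by
  cases s <;> simp [toInt]

lemma sum_map_toInt (w : List DyckStep) :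
    (w.map toInt).sum = (w.count U : ℤ) - w.count D := by
  induction w with
  | nil => simp
  | cons s w ih => cases s <;> simp [toInt, ih] <;> ring

end DyckStep

open DyckStep

def IsDyckPath (m : List ℤ) : Prop :=
  (∀ x ∈ m, x = 1 ∨ x = -1) ∧ (∀ i, 0 ≤ (m.take i).sum) ∧ m.sum = 0

def IsIrreducibleDyckPath (n : ℕ) (l : List ℤ) : Prop :=
  l.length = 2 * n ∧ (∀ x ∈ l, x = 1 ∨ x = -1) ∧
    (∀ i : ℕ, 0 < i → i < 2 * n → 0 < (l.take i).sum) ∧ l.sum = 0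

lemma IsIrreducibleDyckPath.isDyckPath {n : ℕ} {l : List ℤ} (hl : IsIrreducibleDyckPath n l) :
    IsDyckPath l := by
  obtain ⟨hlen, hsteps, hpos, hsum⟩ := hl
  refine ⟨hsteps, fun i => ?_, hsum⟩
  rcases Nat.eq_zero_or_pos i with rfl | hi
  · simp
  rcases lt_or_ge i (2 * n) with hin | hin
  · exact (hpos i hi hin).le
  · rw [take_of_length_le (hlen ▸ hin), hsum]

namespace DyckWord

lemma sum_take_map_toInt (p : DyckWord) (i : ℕ) :
    ((p.toList.map toInt).take i).sum =
      ((p.toList.take i).count U : ℤ) - (p.toList.take i).count D := by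
  rw [← map_take, sum_map_toInt]

lemma isDyckPath_map_toInt (p : DyckWord) : IsDyckPath (p.toList.map toInt) := by
  refine ⟨by simpa using fun s _ => toInt_eq_one_or_neg_one s, fun i => ?_, ?_⟩
  · rw [sum_take_map_toInt, sub_nonneg]
    exact_mod_cast p.count_D_le_count_U i
  · rw [sum_map_toInt, p.count_U_eq_count_D, sub_self]

def ofDyckPath (m : List ℤ) (hm : IsDyckPath m) : DyckWord where
  toList := m.map ofInt
  count_U_eq_count_D := by
    have h := sum_map_toInt (m.map ofInt)
    rw [map_toInt_map_ofInt hm.1, hm.2.2] at h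
    omega
  count_D_le_count_U i := by
    have h := sum_map_toInt ((m.map ofInt).take i)
    rw [map_take, map_toInt_map_ofInt hm.1] at h
    have := hm.2.1 i
    omega

def equivDyckPath : DyckWord ≃ {m : List ℤ // IsDyckPath m} where
  toFun p := ⟨p.toList.map toInt, p.isDyckPath_map_toInt⟩
  invFun m := ofDyckPath m.1 m.2
  left_inv p := DyckWord.ext (by simp [ofDyckPath])
  right_inv m := Subtype.ext (map_toInt_map_ofInt m.2.1)

lemma isIrreducibleDyckPath_map_toInt_iff {n : ℕ} (hn : n ≠ 0) (p : DyckWord) :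
    IsIrreducibleDyckPath n (p.toList.map toInt) ↔ p.IsNested ∧ p.semilength = n := by
  obtain ⟨hsteps, -, hsum⟩ := p.isDyckPath_map_toInt
  simp only [IsIrreducibleDyckPath, IsNested, sum_take_map_toInt, sub_pos, Nat.cast_lt, length_map,
    ← two_mul_semilength_eq_length]
  constructor
  · rintro ⟨hlen, -, hpos, -⟩
    obtain rfl : p.semilength = n := by omega
    exact ⟨⟨fun h0 => hn (h0 ▸ semilength_zero), hpos⟩, rfl⟩
  · rintro ⟨⟨-, hpos⟩, rfl⟩
    exact ⟨rfl, hsteps, hpos, hsum⟩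

def nestedEquivIrreducible {n : ℕ} (hn : n ≠ 0) :
    {p : DyckWord // p.IsNested ∧ p.semilength = n} ≃ {l : List ℤ // IsIrreducibleDyckPath n l} :=
  (equivDyckPath.subtypeEquiv fun p => (isIrreducibleDyckPath_map_toInt_iff hn p).symm).trans
    (Equiv.subtypeSubtypeEquivSubtype IsIrreducibleDyckPath.isDyckPath)

def nestEquiv (n : ℕ) :
    {p : DyckWord // p.semilength = n} ≃ {p : DyckWord // p.IsNested ∧ p.semilength = n + 1} where
  toFun p := ⟨p.1.nest, .nest, by rw [semilength_nest, p.2]⟩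
  invFun p := ⟨p.1.denest p.2.1, by
    have h := congrArg semilength (p.1.nest_denest p.2.1)
    rw [semilength_nest] at h
    exact Nat.add_right_cancel (h.trans p.2.2)⟩
  left_inv p := Subtype.ext p.1.denest_nest
  right_inv p := Subtype.ext (p.1.nest_denest p.2.1)

end DyckWord

/-- For `n ≥ 1`, the number of lists of length `2n` with entries in `{1, -1}` whose
total sum is `0` and all of whose proper nonempty partial sums are strictly positive
(irreducible Dyck paths of length `2n`) equals `catalan (n-1)`. -/
theorem stmt_7 (n : ℕ) (hn : 1 ≤ n) :
    Nat.card {l : List ℤ // l.length = 2 * n ∧ (∀ x ∈ l, x = 1 ∨ x = -1) ∧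
        (∀ i : ℕ, 0 < i → i < 2 * n → 0 < (l.take i).sum) ∧ l.sum = 0} =
      catalan (n - 1) := by
  obtain ⟨k, rfl⟩ := Nat.exists_eq_add_of_le' hn
  calc Nat.card {l : List ℤ // IsIrreducibleDyckPath (k + 1) l}
      = Nat.card {p : DyckWord // p.semilength = k} :=
        Nat.card_congr ((DyckWord.nestEquiv k).trans
          (DyckWord.nestedEquivIrreducible k.succ_ne_zero)).symm
    _ = catalan k := by
        rw [Nat.card_eq_fintype_card, DyckWord.card_dyckWord_semilength_eq_catalan]
end

section
/- For every real number c ≥ 1, ∫_{-2√c}^{2√c} ((1+c)/(2π)) · √(4c - t²)/((1+c)² - t²) dt = 1; that is, the Kesten–McKay density ρ_c is a probability density on ℝ. -/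
/-!
With `s² = b² - a²` one has `√(a² - t²) / (b² - t²) = (1 - s² / (b² - t²)) / √(a² - t²)`,
and both terms have arcsin primitives: `arcsin (t / a)` and
`(s / b) · arcsin (s t / (a √(b² - t²)))`. Evaluating between `-a` and `a` gives
`∫_{-a}^{a} √(a² - t²) / (b² - t²) dt = π (1 - s / b)`. For the Kesten–McKay density take
`a = 2√c`, `b = 1 + c`, `s = c - 1`, so the integral is `2π / (1 + c)`.
-/

open Real Set MeasureTheory intervalIntegral

noncomputable def kestenMcKayAntideriv (a b s t : ℝ) : ℝ :=
  arcsin (t / a) - s / b * arcsin (s * t / (a * √(b ^ 2 - t ^ 2)))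

section KestenMcKay

variable {a b s t : ℝ}

lemma hasDerivAt_arcsin_div (ha : 0 < a) (ht : t ∈ Ioo (-a) a) :
    HasDerivAt (fun t => arcsin (t / a)) (1 / √(a ^ 2 - t ^ 2)) t := by
  have hta : |t / a| < 1 := by
    rw [abs_div, abs_of_pos ha, div_lt_one ha, abs_lt]; exact ht
  have hd := (hasDerivAt_arcsin (abs_lt.1 hta).1.ne' (abs_lt.1 hta).2.ne).comp t
    ((hasDerivAt_id t).div_const a)
  refine hd.congr_deriv ?_
  have hw : 0 < a ^ 2 - t ^ 2 := sub_pos.2 (sq_lt_sq' ht.1 ht.2)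
  rw [show 1 - (t / a) ^ 2 = (a ^ 2 - t ^ 2) / a ^ 2 by field_simp, sqrt_div hw.le,
    sqrt_sq ha.le]
  field_simp

lemma hasDerivAt_arcsin_kestenMcKay (ha : 0 < a) (hb : 0 < b) (hab : b ^ 2 = a ^ 2 + s ^ 2)
    (ht : t ∈ Ioo (-a) a) :
    HasDerivAt (fun t => arcsin (s * t / (a * √(b ^ 2 - t ^ 2))))
      (b * s / ((b ^ 2 - t ^ 2) * √(a ^ 2 - t ^ 2))) t := by
  have ht2 := sq_lt_sq' ht.1 ht.2
  have hw2 : 0 < a ^ 2 - t ^ 2 := by linarith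
  have hu2 : 0 < b ^ 2 - t ^ 2 := by nlinarith [sq_nonneg s]
  set w := √(a ^ 2 - t ^ 2)
  set u := √(b ^ 2 - t ^ 2) with hu_def
  have hw : 0 < w := sqrt_pos.2 hw2
  have hu : 0 < u := sqrt_pos.2 hu2
  have hwsq : w ^ 2 = a ^ 2 - t ^ 2 := sq_sqrt hw2.le
  have husq : u ^ 2 = b ^ 2 - t ^ 2 := sq_sqrt hu2.le
  have hdu : HasDerivAt (fun t => a * √(b ^ 2 - t ^ 2)) (a * (-t / u)) t := by
    have h := ((hasDerivAt_pow 2 t).const_sub (b ^ 2)).sqrt hu2.ne'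
    refine (h.const_mul a).congr_deriv ?_
    rw [← hu_def]
    field_simp
    norm_num
  have hdg := ((hasDerivAt_id t).const_mul s).div hdu (by positivity)
  have hcos : 1 - (s * t / (a * u)) ^ 2 = (b * w / (a * u)) ^ 2 := by
    field_simp
    linear_combination a ^ 2 * husq - b ^ 2 * hwsq + t ^ 2 * hab
  have hg : |s * t / (a * u)| < 1 := by
    rw [← sq_lt_one_iff_abs_lt_one, ← sub_pos, hcos]
    positivity
  refine ((hasDerivAt_arcsin (abs_lt.1 hg).1.ne' (abs_lt.1 hg).2.ne).comp t hdg).congr_deriv ?_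
  rw [hcos, sqrt_sq (by positivity)]
  simp only [id, ← hu_def]
  field_simp
  linear_combination -s * t ^ 2 * husq

lemma hasDerivAt_kestenMcKayAntideriv (ha : 0 < a) (hb : 0 < b) (hab : b ^ 2 = a ^ 2 + s ^ 2)
    (ht : t ∈ Ioo (-a) a) :
    HasDerivAt (kestenMcKayAntideriv a b s) (√(a ^ 2 - t ^ 2) / (b ^ 2 - t ^ 2)) t := by
  refine ((hasDerivAt_arcsin_div ha ht).sub
    ((hasDerivAt_arcsin_kestenMcKay ha hb hab ht).const_mul (s / b))).congr_deriv ?_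
  have hw2 : 0 < a ^ 2 - t ^ 2 := sub_pos.2 (sq_lt_sq' ht.1 ht.2)
  have hu2 : 0 < b ^ 2 - t ^ 2 := by nlinarith [sq_nonneg s, sq_lt_sq' ht.1 ht.2]
  have hwsq : √(a ^ 2 - t ^ 2) ^ 2 = a ^ 2 - t ^ 2 := sq_sqrt hw2.le
  have hw : 0 < √(a ^ 2 - t ^ 2) := sqrt_pos.2 hw2
  field_simp
  linear_combination hab - hwsq

lemma continuousOn_kestenMcKayAntideriv (ha : 0 < a) (hab : b ^ 2 = a ^ 2 + s ^ 2) :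
    ContinuousOn (kestenMcKayAntideriv a b s) (Icc (-a) a) := by
  have hg : ContinuousOn (fun t => s * t / (a * √(b ^ 2 - t ^ 2))) (Icc (-a) a) := by
    rcases eq_or_ne s 0 with rfl | hs
    · simpa using continuousOn_const
    · refine (continuousOn_const.mul continuousOn_id).div (by fun_prop) fun t ht => ?_
      have ht2 : t ^ 2 ≤ a ^ 2 := sq_le_sq' ht.1 ht.2
      have hu2 : 0 < b ^ 2 - t ^ 2 := by nlinarith [sq_pos_of_ne_zero hs]
      positivity
  exact (continuous_arcsin.comp_continuousOn (by fun_prop)).sub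
    (continuousOn_const.mul (continuous_arcsin.comp_continuousOn hg))

lemma kestenMcKayAntideriv_neg :
    kestenMcKayAntideriv a b s (-t) = -kestenMcKayAntideriv a b s t := by
  simp only [kestenMcKayAntideriv, neg_sq, neg_div, mul_neg, arcsin_neg]
  ring

lemma kestenMcKayAntideriv_self (ha : a ≠ 0) (hs : 0 ≤ s) (hab : b ^ 2 = a ^ 2 + s ^ 2) :
    kestenMcKayAntideriv a b s a = π / 2 * (1 - s / b) := by
  have hu : √(b ^ 2 - a ^ 2) = s := by rw [hab, add_sub_cancel_left, sqrt_sq hs]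
  rcases hs.eq_or_lt with rfl | hs
  · simp [kestenMcKayAntideriv, div_self ha]
  · rw [kestenMcKayAntideriv, div_self ha, hu, mul_comm s a, div_self (by positivity),
      arcsin_one]
    ring

theorem integral_sqrt_sq_sub_sq_div_sq_sub_sq (ha : 0 < a) (hb : 0 < b) (hs : 0 ≤ s)
    (hab : b ^ 2 = a ^ 2 + s ^ 2) :
    ∫ t in (-a)..a, √(a ^ 2 - t ^ 2) / (b ^ 2 - t ^ 2) = π * (1 - s / b) := by
  have hle : -a ≤ a := by linarith
  have hcont := continuousOn_kestenMcKayAntideriv ha hab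
  have hderiv := fun (t : ℝ) (ht : t ∈ Ioo (-a) a) => hasDerivAt_kestenMcKayAntideriv ha hb hab ht
  have hnonneg : ∀ t ∈ Ioo (-a) a, 0 ≤ √(a ^ 2 - t ^ 2) / (b ^ 2 - t ^ 2) := fun t ht =>
    div_nonneg (sqrt_nonneg _) (by nlinarith [sq_nonneg s, sq_lt_sq' ht.1 ht.2])
  have hint : IntervalIntegrable (fun t => √(a ^ 2 - t ^ 2) / (b ^ 2 - t ^ 2)) volume (-a) a :=
    (intervalIntegrable_iff_integrableOn_Ioc_of_le hle).2
      (integrableOn_deriv_of_nonneg hcont hderiv hnonneg)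
  rw [integral_eq_sub_of_hasDerivAt_of_le hle hcont hderiv hint, kestenMcKayAntideriv_neg,
    kestenMcKayAntideriv_self ha.ne' hs hab]
  ring

end KestenMcKay

/-- For every real `c ≥ 1`, the Kesten–McKay density integrates to `1` over its
support `[-2√c, 2√c]`. -/
theorem stmt_8 (c : ℝ) (hc : 1 ≤ c) :
    ∫ t in (-(2 * Real.sqrt c))..(2 * Real.sqrt c),
        (1 + c) / (2 * Real.pi) * Real.sqrt (4 * c - t ^ 2) / ((1 + c) ^ 2 - t ^ 2) =
      1 := by
  have hc0 : 0 < c := by linarith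
  have ha2 : (2 * √c) ^ 2 = 4 * c := by rw [mul_pow, sq_sqrt hc0.le]; ring
  have hkm := integral_sqrt_sq_sub_sq_div_sq_sub_sq (a := 2 * √c) (b := 1 + c) (s := c - 1)
    (by positivity) (by linarith) (by linarith) (by rw [ha2]; ring)
  simp only [mul_div_assoc, ← ha2]
  rw [intervalIntegral.integral_const_mul, hkm]
  field_simp
  ring
end

section
/- Let c ≥ 1 be a real number and n ≥ 0 an integer. Then ∫_{-2√c}^{2√c} t^{2n} · ((1+c)/(2π)) · √(4c - t²)/((1+c)² - t²) dt = ∑_{k=0}^{n} (binom(2n, k) - binom(2n, k-1)) · c^k, where binom(2n, -1) = 0; that is, the 2n-th moment of the Kesten–McKay law with parameter c equals the closed-walk count polynomial evaluated at c. -/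
/-!
For `c > 1` the identity `t² = (1 + c)² - ((1 + c)² - t²)` turns the `2(n+1)`-th moment of
the Kesten–McKay law into `(1 + c)²` times the `2n`-th one minus `(1 + c) / (2π)` times a
moment of the semicircle of radius `2√c`; after `t = 2√c sin θ` the latter is a Wallis
integral and equals `2π c^(n+1) Cat(n)`. The total mass is `1` by the arctangent
antiderivative of `1 / (a² cos² θ + b² sin² θ)`. The polynomials
`∑_{k ≤ n} (C(2n, k) - C(2n, k - 1)) c^k` satisfy the same recursion: their coefficients obey
Pascal's rule and the two top coefficients are `±Cat(n)`. At `c = 1` the law is the arcsine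
law, whose `2n`-th moment is `C(2n, n)`, as is the telescoping sum.
-/

open Real MeasureTheory Set Filter Topology

section Binomial

open Finset

/-- `C(N, k) - C(N, k - 1)` with `C(N, -1) = 0`: the coefficient of `c ^ k` in
`(1 - c) * (1 + c) ^ N`. -/
def binomDiff (N k : ℕ) : ℝ :=
  (N.choose k : ℝ) - if k = 0 then 0 else (N.choose (k - 1) : ℝ)

@[simp]
lemma binomDiff_zero_right (N : ℕ) : binomDiff N 0 = 1 := by
  simp [binomDiff]

lemma binomDiff_succ_succ (N k : ℕ) :
    binomDiff (N + 1) (k + 1) = binomDiff N (k + 1) + binomDiff N k := by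
  cases k with
  | zero => simp [binomDiff]
  | succ k =>
    simp only [binomDiff, Nat.choose_succ_succ, Nat.add_sub_cancel, if_neg (Nat.succ_ne_zero _)]
    push_cast
    ring

lemma sum_range_succ_binomDiff (N m : ℕ) :
    ∑ k ∈ range (m + 1), binomDiff N k = N.choose m := by
  induction m with
  | zero => simp
  | succ m ih =>
    rw [sum_range_succ, ih]
    simp [binomDiff]

lemma sum_binomDiff_succ_mul_pow (N m : ℕ) (c : ℝ) :
    ∑ k ∈ range (m + 1), binomDiff (N + 1) k * c ^ k =
      ∑ k ∈ range (m + 1), binomDiff N k * c ^ k +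
        c * ∑ k ∈ range m, binomDiff N k * c ^ k := by
  have hshift : ∑ k ∈ range m, binomDiff N k * c ^ (k + 1) =
      c * ∑ k ∈ range m, binomDiff N k * c ^ k := by
    rw [mul_sum]
    exact sum_congr rfl fun k _ => by ring
  simp only [sum_range_succ' _ m, binomDiff_succ_succ, add_mul, sum_add_distrib, hshift,
    binomDiff_zero_right]
  ring

lemma catalan_eq_choose_sub_choose (n : ℕ) :
    (catalan n : ℝ) = (2 * n).choose n - (2 * n).choose (n + 1) := by
  have hcat : ((n : ℝ) + 1) * catalan n = (2 * n).choose n := by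
    exact_mod_cast
      (succ_mul_catalan_eq_centralBinom n).trans (Nat.centralBinom_eq_two_mul_choose n)
  have hchoose : ((2 * n).choose (n + 1) : ℝ) * (n + 1) = (2 * n).choose n * n := by
    have := Nat.choose_succ_right_eq (2 * n) n
    rw [show 2 * n - n = n by omega] at this
    exact_mod_cast this
  have hn : (n : ℝ) + 1 ≠ 0 := by positivity
  apply mul_left_cancel₀ hn
  linear_combination hcat + hchoose

lemma binomDiff_two_mul_succ (n : ℕ) : binomDiff (2 * n) (n + 1) = -catalan n := by
  simp [binomDiff, catalan_eq_choose_sub_choose]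

lemma binomDiff_two_mul_self (n : ℕ) : binomDiff (2 * n) n = catalan n := by
  rcases n with _ | n
  · simp
  · have hsymm : (2 * (n + 1)).choose n = (2 * (n + 1)).choose (n + 2) :=
      Nat.choose_symm_of_eq_add (by ring)
    simp [binomDiff, catalan_eq_choose_sub_choose, hsymm]

lemma sum_binomDiff_two_mul_succ (n : ℕ) (c : ℝ) :
    ∑ k ∈ range (n + 2), binomDiff (2 * (n + 1)) k * c ^ k =
      (1 + c) ^ 2 * ∑ k ∈ range (n + 1), binomDiff (2 * n) k * c ^ k
        - (1 + c) * c ^ (n + 1) * catalan n := by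
  rw [show 2 * (n + 1) = 2 * n + 1 + 1 by ring, sum_binomDiff_succ_mul_pow,
    sum_binomDiff_succ_mul_pow, sum_binomDiff_succ_mul_pow, sum_range_succ _ (n + 1),
    sum_range_succ _ n, binomDiff_two_mul_succ, binomDiff_two_mul_self]
  ring

end Binomial

lemma image_mul_sin_Ioo {R : ℝ} (hR : 0 < R) :
    (fun θ => R * sin θ) '' Ioo (-(π / 2)) (π / 2) = Ioo (-R) R := by
  have hsin : sin '' Ioo (-(π / 2)) (π / 2) = Ioo (-1) 1 :=
    sinPartialHomeomorph.image_source_eq_target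
  rw [← image_image (R * ·) sin, hsin, image_mul_left_Ioo hR]
  simp

lemma integral_eq_integral_mul_cos_mul_comp_mul_sin {R : ℝ} (hR : 0 < R) (g : ℝ → ℝ) :
    ∫ t in (-R)..R, g t = ∫ θ in (-(π / 2))..(π / 2), R * cos θ * g (R * sin θ) := by
  have hinj : InjOn (fun θ => R * sin θ) (Ioo (-(π / 2)) (π / 2)) := fun x hx y hy hxy =>
    injOn_sin (Ioo_subset_Icc_self hx) (Ioo_subset_Icc_self hy) (mul_left_cancel₀ hR.ne' hxy)
  rw [intervalIntegral.integral_of_le (by linarith),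
    intervalIntegral.integral_of_le (by linarith [pi_pos]), integral_Ioc_eq_integral_Ioo,
    integral_Ioc_eq_integral_Ioo, ← image_mul_sin_Ioo hR,
    integral_image_eq_integral_abs_deriv_smul measurableSet_Ioo
      (fun θ _ => ((hasDerivAt_sin θ).const_mul R).hasDerivWithinAt) hinj]
  refine setIntegral_congr_fun measurableSet_Ioo fun θ hθ => ?_
  rw [smul_eq_mul, abs_of_pos (mul_pos hR (cos_pos_of_mem_Ioo hθ))]

lemma integral_sin_pow_two_mul (m : ℕ) :
    ∫ θ in (-(π / 2))..(π / 2), sin θ ^ (2 * m) = π * m.centralBinom / 4 ^ m := by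
  induction m with
  | zero => simp
  | succ m ih =>
    have hcb : ((m : ℝ) + 1) * (m + 1).centralBinom = 2 * (2 * m + 1) * m.centralBinom := by
      exact_mod_cast Nat.succ_mul_centralBinom_succ m
    rw [mul_add_one, integral_sin_pow, ih, cos_neg, cos_pi_div_two]
    field_simp
    push_cast
    linear_combination (-2 * π * (4 : ℝ) ^ m) * hcb

lemma integral_sin_pow_two_mul_mul_cos_sq (m : ℕ) :
    ∫ θ in (-(π / 2))..(π / 2), sin θ ^ (2 * m) * cos θ ^ 2 =
      π * catalan m / (2 * 4 ^ m) := by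
  have hcos : ∀ θ : ℝ,
      sin θ ^ (2 * m) * cos θ ^ 2 = sin θ ^ (2 * m) - sin θ ^ (2 * (m + 1)) := fun θ => by
    rw [cos_sq']; ring
  have hcat : ((m : ℝ) + 1) * catalan m = m.centralBinom := by
    exact_mod_cast succ_mul_catalan_eq_centralBinom m
  have hcb : ((m : ℝ) + 1) * (m + 1).centralBinom = 2 * (2 * m + 1) * m.centralBinom := by
    exact_mod_cast Nat.succ_mul_centralBinom_succ m
  simp_rw [hcos]
  rw [intervalIntegral.integral_sub (by apply Continuous.intervalIntegrable; fun_prop)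
    (by apply Continuous.intervalIntegrable; fun_prop), integral_sin_pow_two_mul,
    integral_sin_pow_two_mul]
  have hm : (m : ℝ) + 1 ≠ 0 := by positivity
  field_simp
  apply mul_left_cancel₀ hm
  linear_combination (-2 * (4 : ℝ) ^ m) * hcb - 4 * (4 : ℝ) ^ m * hcat

lemma sq_two_mul_sqrt {c : ℝ} (hc : 0 ≤ c) : (2 * √c) ^ 2 = 4 * c := by
  rw [mul_pow, sq_sqrt hc]; norm_num

lemma sqrt_sq_sub_sq_mul_sin {R θ : ℝ} (hR : 0 ≤ R) (hθ : 0 ≤ cos θ) :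
    √(R ^ 2 - (R * sin θ) ^ 2) = R * cos θ := by
  rw [show R ^ 2 - (R * sin θ) ^ 2 = (R * cos θ) ^ 2 by rw [mul_pow, mul_pow, cos_sq']; ring,
    sqrt_sq (mul_nonneg hR hθ)]

lemma integral_pow_two_mul_mul_sqrt_four_mul_sub_sq {c : ℝ} (hc : 0 < c) (m : ℕ) :
    ∫ t in (-(2 * √c))..(2 * √c), t ^ (2 * m) * √(4 * c - t ^ 2) =
      2 * π * c ^ (m + 1) * catalan m := by
  have hR : 0 < 2 * √c := by positivity
  have hpt : ∀ θ ∈ uIcc (-(π / 2)) (π / 2),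
      2 * √c * cos θ * ((2 * √c * sin θ) ^ (2 * m) * √(4 * c - (2 * √c * sin θ) ^ 2)) =
        (4 * c) ^ (m + 1) * (sin θ ^ (2 * m) * cos θ ^ 2) := by
    intro θ hθ
    rw [uIcc_of_le (by linarith [pi_pos])] at hθ
    rw [← sq_two_mul_sqrt hc.le, sqrt_sq_sub_sq_mul_sin hR.le (cos_nonneg_of_mem_Icc hθ),
      pow_mul, mul_pow, pow_mul]
    ring
  rw [integral_eq_integral_mul_cos_mul_comp_mul_sin hR, intervalIntegral.integral_congr hpt,
    intervalIntegral.integral_const_mul, integral_sin_pow_two_mul_mul_cos_sq]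
  field_simp
  ring

lemma sq_mul_cos_sq_add_sq_mul_sin_sq_pos {a b : ℝ} (ha : a ≠ 0) (hb : b ≠ 0) (θ : ℝ) :
    0 < a ^ 2 * cos θ ^ 2 + b ^ 2 * sin θ ^ 2 := by
  rcases eq_or_ne (cos θ) 0 with h | h
  · have : sin θ ^ 2 = 1 := by rw [sin_sq, h]; ring
    rw [h, this]; positivity
  · positivity

lemma continuous_inv_sq_mul_cos_sq_add_sq_mul_sin_sq {a b : ℝ} (ha : a ≠ 0) (hb : b ≠ 0) :
    Continuous fun θ => (a ^ 2 * cos θ ^ 2 + b ^ 2 * sin θ ^ 2)⁻¹ :=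
  Continuous.inv₀ (by fun_prop) fun θ => (sq_mul_cos_sq_add_sq_mul_sin_sq_pos ha hb θ).ne'

lemma integral_inv_sq_mul_cos_sq_add_sq_mul_sin_sq {a b : ℝ} (ha : 0 < a) (hb : 0 < b) :
    ∫ θ in (-(π / 2))..(π / 2), (a ^ 2 * cos θ ^ 2 + b ^ 2 * sin θ ^ 2)⁻¹ =
      π / (a * b) := by
  have hderiv : ∀ θ ∈ Ioo (-(π / 2)) (π / 2),
      HasDerivAt (fun θ => arctan (b / a * tan θ) / (a * b))
        (a ^ 2 * cos θ ^ 2 + b ^ 2 * sin θ ^ 2)⁻¹ θ := by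
    intro θ hθ
    have hcos := (cos_pos_of_mem_Ioo hθ).ne'
    refine ((((hasDerivAt_tan hcos).const_mul (b / a)).arctan).div_const (a * b)).congr_deriv ?_
    rw [tan_eq_sin_div_cos]
    field_simp
  have hbot : Tendsto (fun θ => arctan (b / a * tan θ) / (a * b)) (𝓝[>] (-(π / 2)))
      (𝓝 (-(π / 2) / (a * b))) :=
    ((tendsto_arctan_atBot.mono_right nhdsWithin_le_nhds).comp
      (tendsto_tan_neg_pi_div_two.const_mul_atBot (by positivity))).div_const _
  have htop : Tendsto (fun θ => arctan (b / a * tan θ) / (a * b)) (𝓝[<] (π / 2))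
      (𝓝 (π / 2 / (a * b))) :=
    ((tendsto_arctan_atTop.mono_right nhdsWithin_le_nhds).comp
      (tendsto_tan_pi_div_two.const_mul_atTop (by positivity))).div_const _
  rw [intervalIntegral.integral_eq_sub_of_hasDerivAt_of_tendsto (by linarith [pi_pos]) hderiv
    ((continuous_inv_sq_mul_cos_sq_add_sq_mul_sin_sq ha.ne' hb.ne').intervalIntegrable _ _)
    hbot htop]
  ring

noncomputable def kestenMcKay (c t : ℝ) : ℝ :=
  (1 + c) / (2 * π) * √(4 * c - t ^ 2) / ((1 + c) ^ 2 - t ^ 2)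

lemma kestenMcKay_two_mul_sqrt_mul_sin {c θ : ℝ} (hc : 0 ≤ c) (hθ : 0 ≤ cos θ) :
    kestenMcKay c (2 * √c * sin θ) =
      (1 + c) / (2 * π) * (2 * √c * cos θ) /
        ((1 + c) ^ 2 * cos θ ^ 2 + (c - 1) ^ 2 * sin θ ^ 2) := by
  rw [kestenMcKay, ← sq_two_mul_sqrt hc, sqrt_sq_sub_sq_mul_sin (by positivity) hθ, cos_sq',
    mul_pow, sq_two_mul_sqrt hc]
  ring

lemma sq_lt_sq_one_add_of_mem_uIcc {c t : ℝ} (hc : 1 < c)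
    (ht : t ∈ uIcc (-(2 * √c)) (2 * √c)) : t ^ 2 < (1 + c) ^ 2 := by
  rw [uIcc_of_le (by have := sqrt_nonneg c; linarith)] at ht
  have ht2 : t ^ 2 ≤ 4 * c := sq_two_mul_sqrt (c := c) (by linarith) ▸ sq_le_sq' ht.1 ht.2
  nlinarith

lemma continuousOn_kestenMcKay {c : ℝ} (hc : 1 < c) :
    ContinuousOn (kestenMcKay c) (uIcc (-(2 * √c)) (2 * √c)) :=
  ContinuousOn.div (by fun_prop) (by fun_prop) fun _ ht =>
    (sub_pos.2 (sq_lt_sq_one_add_of_mem_uIcc hc ht)).ne'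

lemma integral_kestenMcKay {c : ℝ} (hc : 1 < c) :
    ∫ t in (-(2 * √c))..(2 * √c), kestenMcKay c t = 1 := by
  have hc0 : 0 < c := by linarith
  have hc1 : 0 < 1 + c := by linarith
  have hc2 : 0 < c - 1 := by linarith
  have hpt : ∀ θ ∈ uIcc (-(π / 2)) (π / 2),
      2 * √c * cos θ * kestenMcKay c (2 * √c * sin θ) =
        (1 + c) / (2 * π) - (1 + c) * (c - 1) ^ 2 / (2 * π) *
          ((1 + c) ^ 2 * cos θ ^ 2 + (c - 1) ^ 2 * sin θ ^ 2)⁻¹ := by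
    intro θ hθ
    rw [uIcc_of_le (by linarith [pi_pos])] at hθ
    set D := (1 + c) ^ 2 * cos θ ^ 2 + (c - 1) ^ 2 * sin θ ^ 2 with hD
    have hD0 : D ≠ 0 := (sq_mul_cos_sq_add_sq_mul_sin_sq_pos hc1.ne' hc2.ne' θ).ne'
    have hnum : 2 * √c * cos θ * (2 * √c * cos θ) = D - (c - 1) ^ 2 := by
      linear_combination (4 * cos θ ^ 2) * sq_sqrt hc0.le - (c - 1) ^ 2 * sin_sq_add_cos_sq θ
    rw [kestenMcKay_two_mul_sqrt_mul_sin hc0.le (cos_nonneg_of_mem_Icc hθ), ← hD]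
    calc 2 * √c * cos θ * ((1 + c) / (2 * π) * (2 * √c * cos θ) / D)
        = (1 + c) / (2 * π) * ((2 * √c * cos θ * (2 * √c * cos θ)) / D) := by ring
      _ = _ := by rw [hnum, sub_div, div_self hD0]; ring
  rw [integral_eq_integral_mul_cos_mul_comp_mul_sin (by positivity),
    intervalIntegral.integral_congr hpt, intervalIntegral.integral_sub intervalIntegrable_const
      (((continuous_inv_sq_mul_cos_sq_add_sq_mul_sin_sq hc1.ne' hc2.ne').intervalIntegrable
        _ _).const_mul _),
    intervalIntegral.integral_const, intervalIntegral.integral_const_mul,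
    integral_inv_sq_mul_cos_sq_add_sq_mul_sin_sq hc1 hc2, smul_eq_mul]
  field_simp
  ring

lemma integral_pow_mul_kestenMcKay_succ {c : ℝ} (hc : 1 < c) (n : ℕ) :
    ∫ t in (-(2 * √c))..(2 * √c), t ^ (2 * (n + 1)) * kestenMcKay c t =
      (1 + c) ^ 2 * (∫ t in (-(2 * √c))..(2 * √c), t ^ (2 * n) * kestenMcKay c t)
        - (1 + c) * c ^ (n + 1) * catalan n := by
  have hpt : ∀ t ∈ uIcc (-(2 * √c)) (2 * √c), t ^ (2 * (n + 1)) * kestenMcKay c t =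
      (1 + c) ^ 2 * (t ^ (2 * n) * kestenMcKay c t)
        - (1 + c) / (2 * π) * (t ^ (2 * n) * √(4 * c - t ^ 2)) := by
    intro t ht
    have hden := (sub_pos.2 (sq_lt_sq_one_add_of_mem_uIcc hc ht)).ne'
    rw [kestenMcKay]
    field_simp
    ring
  have hint : IntervalIntegrable (fun t => t ^ (2 * n) * kestenMcKay c t) volume
      (-(2 * √c)) (2 * √c) :=
    ((continuous_pow _).continuousOn.mul (continuousOn_kestenMcKay hc)).intervalIntegrable
  rw [intervalIntegral.integral_congr hpt, intervalIntegral.integral_sub (hint.const_mul _)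
    (by apply Continuous.intervalIntegrable; fun_prop),
    intervalIntegral.integral_const_mul, intervalIntegral.integral_const_mul,
    integral_pow_two_mul_mul_sqrt_four_mul_sub_sq (by linarith)]
  congr 1
  field_simp

lemma kestenMcKay_one (t : ℝ) : kestenMcKay 1 t = (π * √(4 - t ^ 2))⁻¹ := by
  rw [kestenMcKay, mul_div_assoc]
  norm_num [sqrt_div_self']
  ring

lemma integral_pow_mul_kestenMcKay_one (n : ℕ) :
    ∫ t in (-2)..2, t ^ (2 * n) * kestenMcKay 1 t = n.centralBinom := by
  have hpt : ∀ᵐ θ, θ ∈ uIoc (-(π / 2)) (π / 2) →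
      2 * cos θ * ((2 * sin θ) ^ (2 * n) * kestenMcKay 1 (2 * sin θ)) =
        4 ^ n / π * sin θ ^ (2 * n) := by
    filter_upwards [Measure.ae_ne volume (π / 2)] with θ hne hθ
    rw [uIoc_of_le (by linarith [pi_pos])] at hθ
    have hcos := cos_pos_of_mem_Ioo ⟨hθ.1, lt_of_le_of_ne hθ.2 hne⟩
    have h4 : (2 : ℝ) ^ (2 * n) = 4 ^ n := by rw [pow_mul]; norm_num
    rw [kestenMcKay_one, show (4 : ℝ) - (2 * sin θ) ^ 2 = 2 ^ 2 - (2 * sin θ) ^ 2 by norm_num,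
      sqrt_sq_sub_sq_mul_sin zero_le_two hcos.le, mul_pow, h4]
    field_simp
  rw [integral_eq_integral_mul_cos_mul_comp_mul_sin two_pos,
    intervalIntegral.integral_congr_ae hpt, intervalIntegral.integral_const_mul,
    integral_sin_pow_two_mul]
  field_simp

/-- For real `c ≥ 1` and `n ≥ 0`, the `2n`-th moment of the Kesten–McKay law with
parameter `c` equals `∑_{k=0}^{n} (binom(2n,k) - binom(2n,k-1)) * c^k`, with the
convention `binom(2n,-1) = 0`. -/
theorem stmt_9 (c : ℝ) (hc : 1 ≤ c) (n : ℕ) :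
    ∫ t in (-(2 * Real.sqrt c))..(2 * Real.sqrt c),
        t ^ (2 * n) *
          ((1 + c) / (2 * Real.pi) * Real.sqrt (4 * c - t ^ 2) / ((1 + c) ^ 2 - t ^ 2)) =
      ∑ k ∈ Finset.range (n + 1),
        (((2 * n).choose k : ℝ) - if k = 0 then 0 else ((2 * n).choose (k - 1) : ℝ)) *
          c ^ k := by
  change ∫ t in (-(2 * √c))..(2 * √c), t ^ (2 * n) * kestenMcKay c t =
    ∑ k ∈ Finset.range (n + 1), binomDiff (2 * n) k * c ^ k
  rcases hc.eq_or_lt with rfl | hc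
  · simpa [sum_range_succ_binomDiff, Nat.centralBinom_eq_two_mul_choose] using
      integral_pow_mul_kestenMcKay_one n
  · induction n with
    | zero => simpa using integral_kestenMcKay hc
    | succ n ih => rw [integral_pow_mul_kestenMcKay_succ hc, ih, sum_binomDiff_two_mul_succ]
end

section
/- For every integer n ≥ 0, ∫_{-2}^{2} t^{2n} · (1/(2π))·√(4 - t²) dt = catalan n; that is, the even moments of the semicircle law are the Catalan numbers. -/
open Real Finset intervalIntegral

lemma aux_J_even (k : ℕ) :
    (∫ x in (-(π/2))..(π/2), Real.sin x ^ (2 * k)) =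
      π * ∏ i ∈ Finset.range k, (2 * (i : ℝ) + 1) / (2 * i + 2) := by
  induction' k with k ih
  · simp
  rw [Finset.prod_range_succ_comm, mul_left_comm, ← ih, Nat.mul_succ, integral_sin_pow]
  have h1 : Real.cos (π/2) = 0 := Real.cos_pi_div_two
  have h2 : Real.cos (-(π/2)) = 0 := by rw [Real.cos_neg]; exact h1
  rw [h1, h2]
  push_cast
  ring

lemma aux_binom (n : ℕ) :
    (4 : ℝ) ^ n * ∏ i ∈ Finset.range n, (2 * (i : ℝ) + 1) / (2 * i + 2) =
      (Nat.centralBinom n : ℝ) := by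
  induction' n with k ih
  · simp [Nat.centralBinom]
  rw [Finset.prod_range_succ, pow_succ]
  have hrec : ((k : ℝ) + 1) * (Nat.centralBinom (k + 1) : ℝ) =
      2 * (2 * k + 1) * (Nat.centralBinom k : ℝ) := by
    exact_mod_cast congrArg (Nat.cast : ℕ → ℝ) (Nat.succ_mul_centralBinom_succ k)
  have hk : ((k : ℝ) + 1) ≠ 0 := by positivity
  have h2k : (2 * (k:ℝ) + 2) ≠ 0 := by positivity
  calc (4:ℝ) ^ k * 4 * ((∏ i ∈ Finset.range k, (2 * (i : ℝ) + 1) / (2 * i + 2)) * ((2 * k + 1) / (2 * k + 2)))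
      = ((4:ℝ) ^ k * ∏ i ∈ Finset.range k, (2 * (i : ℝ) + 1) / (2 * i + 2)) * (4 * (2 * k + 1) / (2 * k + 2)) := by
        ring
    _ = (Nat.centralBinom k : ℝ) * (4 * (2 * k + 1) / (2 * k + 2)) := by rw [ih]
    _ = (Nat.centralBinom (k + 1) : ℝ) := by
        field_simp
        linear_combination (-2 : ℝ) * hrec

/-- The even moments of the semicircle law are the Catalan numbers:
`∫_{-2}^{2} t^{2n} (1/(2π))√(4 - t^2) dt = catalan n`. -/
theorem stmt_16 (n : ℕ) :
    ∫ t in (-2 : ℝ)..2, t ^ (2 * n) * (1 / (2 * Real.pi) * Real.sqrt (4 - t ^ 2)) =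
      catalan n := by
  have hπ : (0:ℝ) < π := Real.pi_pos
  set g : ℝ → ℝ := fun t => t ^ (2 * n) * (1 / (2 * π) * Real.sqrt (4 - t ^ 2)) with hg
  -- substitution t = 2 sin θ
  have hderiv : ∀ θ ∈ Set.uIcc (-(π/2)) (π/2),
      HasDerivAt (fun θ => 2 * Real.sin θ) (2 * Real.cos θ) θ := by
    intro θ _
    simpa using (Real.hasDerivAt_sin θ).const_mul 2
  have hcont : ContinuousOn (fun θ => 2 * Real.cos θ) (Set.uIcc (-(π/2)) (π/2)) :=
    (continuous_const.mul Real.continuous_cos).continuousOn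
  have hgc : Continuous g := by
    apply Continuous.mul (by fun_prop)
    exact continuous_const.mul (Real.continuous_sqrt.comp (by fun_prop))
  have key := intervalIntegral.integral_comp_smul_deriv hderiv hcont hgc
  have hfa : 2 * Real.sin (-(π/2)) = -2 := by simp
  have hfb : 2 * Real.sin (π/2) = 2 := by simp
  rw [hfa, hfb] at key
  rw [← key]
  -- simplify the integrand
  have hcongr : ∀ θ ∈ Set.uIcc (-(π/2)) (π/2),
      (2 * Real.cos θ) • ((g ∘ fun θ => 2 * Real.sin θ) θ)
        = (2 * 4 ^ n / π) * (Real.sin θ ^ (2 * n) * Real.cos θ ^ 2) := by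
    intro θ hθ
    rw [Set.uIcc_of_le (by linarith) ] at hθ
    have hcos : 0 ≤ Real.cos θ :=
      Real.cos_nonneg_of_mem_Icc ⟨hθ.1, hθ.2⟩
    have hsqrt : Real.sqrt (4 - (2 * Real.sin θ) ^ 2) = 2 * Real.cos θ := by
      have : 4 - (2 * Real.sin θ) ^ 2 = (2 * Real.cos θ) ^ 2 := by
        have := Real.sin_sq_add_cos_sq θ
        nlinarith
      rw [this, Real.sqrt_sq (by positivity)]
    simp only [Function.comp, hg, smul_eq_mul, hsqrt]
    rw [mul_pow 2 (Real.sin θ)]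
    have h4 : (2:ℝ) ^ (2 * n) = 4 ^ n := by
      rw [pow_mul]; norm_num
    rw [h4]
    field_simp
  rw [intervalIntegral.integral_congr hcongr, intervalIntegral.integral_const_mul]
  -- split cos² = 1 - sin²
  have hsplit : (∫ θ in (-(π/2))..(π/2), Real.sin θ ^ (2 * n) * Real.cos θ ^ 2)
      = (∫ θ in (-(π/2))..(π/2), Real.sin θ ^ (2 * n))
        - ∫ θ in (-(π/2))..(π/2), Real.sin θ ^ (2 * (n + 1)) := by
    rw [← intervalIntegral.integral_sub]
    · apply intervalIntegral.integral_congr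
      intro θ _
      have h := Real.sin_sq_add_cos_sq θ
      show Real.sin θ ^ (2 * n) * Real.cos θ ^ 2
          = Real.sin θ ^ (2 * n) - Real.sin θ ^ (2 * (n + 1))
      have hc : Real.cos θ ^ 2 = 1 - Real.sin θ ^ 2 := by linarith
      rw [hc, Nat.mul_succ, pow_add]
      ring
    · exact (Real.continuous_sin.pow _).intervalIntegrable _ _
    · exact (Real.continuous_sin.pow _).intervalIntegrable _ _
  rw [hsplit, aux_J_even n, aux_J_even (n + 1), Finset.prod_range_succ]
  set p : ℝ := ∏ i ∈ Finset.range n, (2 * (i : ℝ) + 1) / (2 * i + 2) with hp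
  have hcb : (4:ℝ) ^ n * p = (Nat.centralBinom n : ℝ) := aux_binom n
  have hcat : ((n : ℝ) + 1) * (catalan n : ℝ) = (Nat.centralBinom n : ℝ) := by
    exact_mod_cast congrArg (Nat.cast : ℕ → ℝ) (succ_mul_catalan_eq_centralBinom n)
  have hn1 : ((n:ℝ) + 1) ≠ 0 := by positivity
  have h2n2 : (2 * (n:ℝ) + 2) ≠ 0 := by positivity
  rw [← hcb] at hcat
  field_simp
  nlinarith [hcat]
end

section
/- For every integer n ≥ 0, ∫_{-2}^{2} t^{2n} / (π·√(4 - t²)) dt = binom(2n, n); that is, the even moments of the arcsine law on [-2, 2] are the central binomial coefficients. -/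
open Real MeasureTheory Set intervalIntegral

private lemma four_pow_mul_prod (n : ℕ) :
    (4:ℝ)^n * ∏ i ∈ Finset.range n, (2*(i:ℝ)+1)/(2*i+2) = (2*n).choose n := by
  induction n with
  | zero => simp
  | succ k ih =>
    have h' : ((k:ℝ)+1) * ((2*(k+1)).choose (k+1) : ℝ) = 2*(2*k+1) * ((2*k).choose k : ℝ) := by
      have h := Nat.succ_mul_centralBinom_succ k
      rw [Nat.centralBinom_eq_two_mul_choose, Nat.centralBinom_eq_two_mul_choose] at h
      exact_mod_cast congrArg (Nat.cast : ℕ → ℝ) h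
    have h2 : (2*(k:ℝ)+2) ≠ 0 := by positivity
    rw [Finset.prod_range_succ, pow_succ,
      show (4:ℝ)^k*4*((∏ i ∈ Finset.range k, (2*(i:ℝ)+1)/(2*i+2))*((2*(k:ℝ)+1)/(2*k+2)))
        = ((4:ℝ)^k*∏ i ∈ Finset.range k, (2*(i:ℝ)+1)/(2*i+2))*(4*((2*(k:ℝ)+1)/(2*k+2))) from by ring,
      ih]
    field_simp
    nlinarith [h']

private lemma sin_pow_integral (n : ℕ) :
    ∫ x in (-(π/2))..(π/2), Real.sin x ^ (2*n)
      = π * ∏ i ∈ Finset.range n, (2*(i:ℝ)+1)/(2*i+2) := by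
  have hper : Function.Periodic (fun x : ℝ => Real.sin x ^ (2*n)) π := by
    intro x; simp only [Real.sin_add_pi, Even.neg_pow (even_two_mul n)]
  have h := hper.intervalIntegral_add_eq (-(π/2)) 0
  simp only [zero_add] at h
  rw [show -(π/2) + π = π/2 by ring] at h
  rw [h, integral_sin_pow_even]

/-- The even moments of the arcsine law on `[-2, 2]` are the central binomial
coefficients: `∫_{-2}^{2} t^{2n} / (π√(4 - t²)) dt = binom(2n, n)`. -/
theorem stmt_17 (n : ℕ) :
    ∫ t in (-2 : ℝ)..2, t ^ (2 * n) / (Real.pi * Real.sqrt (4 - t ^ 2)) =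
      (2 * n).choose n := by
  have hpi2 : (0:ℝ) < π/2 := by positivity
  have step1 :
      ∫ t in (-2 : ℝ)..2, t ^ (2 * n) / (Real.pi * Real.sqrt (4 - t ^ 2)) =
        ∫ θ in Ioo (-(π/2)) (π/2),
          |2 * Real.cos θ| * ((2*Real.sin θ) ^ (2*n) / (π * Real.sqrt (4 - (2*Real.sin θ)^2))) := by
    have himg : (fun θ : ℝ => 2 * Real.sin θ) '' Ioo (-(π/2)) (π/2) = Ioo (-2 : ℝ) 2 := by
      ext t
      constructor
      · rintro ⟨θ, hθ, rfl⟩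
        have h := Real.mapsTo_sin_Ioo hθ
        simp only [mem_Ioo] at h ⊢
        exact ⟨by linarith [h.1], by linarith [h.2]⟩
      · intro ht
        refine ⟨Real.arcsin (t/2), ⟨Real.neg_pi_div_two_lt_arcsin.2 (by linarith [ht.1]),
          Real.arcsin_lt_pi_div_two.2 (by linarith [ht.2])⟩, ?_⟩
        show 2 * Real.sin (Real.arcsin (t/2)) = t
        rw [Real.sin_arcsin (by linarith [ht.1]) (by linarith [ht.2])]
        ring
    have hderiv : ∀ θ ∈ Ioo (-(π/2)) (π/2),
        HasDerivWithinAt (fun θ : ℝ => 2 * Real.sin θ) (2 * Real.cos θ) (Ioo (-(π/2)) (π/2)) θ :=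
      fun θ _ => ((Real.hasDerivAt_sin θ).const_mul 2).hasDerivWithinAt
    have hinj : InjOn (fun θ : ℝ => 2 * Real.sin θ) (Ioo (-(π/2)) (π/2)) := by
      intro a ha b hb h
      exact Real.injOn_sin (Ioo_subset_Icc_self ha) (Ioo_subset_Icc_self hb)
        (by dsimp at h; linarith)
    have h := MeasureTheory.integral_image_eq_integral_abs_deriv_smul measurableSet_Ioo hderiv hinj
      (fun t => t ^ (2 * n) / (Real.pi * Real.sqrt (4 - t ^ 2)))
    rw [himg] at h
    rw [intervalIntegral.integral_of_le (by norm_num : (-2:ℝ) ≤ 2),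
      MeasureTheory.integral_Ioc_eq_integral_Ioo, h]
    simp [smul_eq_mul]
  have step2 :
      ∫ θ in Ioo (-(π/2)) (π/2),
          |2 * Real.cos θ| * ((2*Real.sin θ) ^ (2*n) / (π * Real.sqrt (4 - (2*Real.sin θ)^2)))
        = ∫ θ in Ioo (-(π/2)) (π/2), (4:ℝ)^n / π * Real.sin θ ^ (2*n) := by
    apply MeasureTheory.setIntegral_congr_fun measurableSet_Ioo
    intro θ hθ
    have hcos : 0 < Real.cos θ := Real.cos_pos_of_mem_Ioo hθ
    have hsq : 4 - (2*Real.sin θ)^2 = (2*Real.cos θ)^2 := by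
      nlinarith [Real.sin_sq_add_cos_sq θ]
    dsimp only
    rw [hsq, Real.sqrt_sq (by linarith), abs_of_pos (by linarith)]
    have hπ : π ≠ 0 := Real.pi_ne_zero
    field_simp
    rw [mul_pow, show (2:ℝ)^(2*n) = 4^n by rw [pow_mul]; norm_num]
  rw [step1, step2, MeasureTheory.integral_const_mul,
    ← MeasureTheory.integral_Ioc_eq_integral_Ioo,
    ← intervalIntegral.integral_of_le (by linarith : -(π/2) ≤ π/2),
    sin_pow_integral]
  rw [← four_pow_mul_prod n]
  field_simp
end
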